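/- arXiv:2402.18921 — 2 statements merged into one kernel-verified Lean document; each statement's English description precedes it below -/
import Mathlib

section
/- Let A = ℓ(Y₁,Y₂) − θℓ₁(Y₁,X₂) − θℓ₁(X₁,Y₂) + θ²ℓ₂(X₁,X₂), where θ ∈ [0,1], ℓ₁(y₁,x₂) = E[ℓ(y₁,Y₂)|X₂=x₂], ℓ₂(x₁,x₂) = E[ℓ(Y₁,Y₂)|X₁,X₂], and (X₁,Y₁),(X₂,Y₂) are i.i.d. with square-integrable ℓ. Then Var(A) = Var(ℓ(Y₁,Y₂)) − 2θ(2−θ)·Var(ℓ₁(Y₁,X₂)) + θ²(2−θ)²·Var(ℓ₂(X₁,X₂)). -/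
/-!
Transport everything to the product space `(E × F) × (E × F)` with the law `ν ⊗ ν` of the two
samples, on which exchanging the samples is measure preserving. Write `U = ℓ₁(Y₁,X₂)`,
`V = ℓ₁(Y₂,X₁)`, `W = ℓ₂(X₁,X₂)`. Expanding `Var(ℓ - θU - θV + θ²W)` bilinearly, every covariance
is `Var U` or `Var W`: `cov(ℓ,U) = Var U` and `cov(ℓ,W) = Var W` because `U` and `W` are
conditional expectations of `ℓ`; exchanging the samples gives `Var V = Var U`,
`cov(ℓ,V) = cov(ℓ,U)` and `ℓ₂(X₂,X₁) = W` a.s. Since the samples are independent, knowing all of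
the first sample instead of `Y₁` does not change `U = E[ℓ | Y₁,X₂]`; by the tower property
`W = E[U | X₁,X₂]`, and after exchanging `ℓ₂(X₂,X₁) = E[V | X₁,Y₁,X₂]`, which gives
`cov(U,W) = cov(V,W) = cov(U,V) = Var W`.
-/

open MeasureTheory ProbabilityTheory

lemma stronglyMeasurable_comap_comp {α γ : Type*} [MeasurableSpace γ] (r : α → γ) (φ : γ → ℝ)
    (hφ : Measurable φ) :
    StronglyMeasurable[MeasurableSpace.comap r inferInstance] fun x => φ (r x) :=
  (hφ.comp (comap_measurable r)).stronglyMeasurable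

lemma setIntegral_eq_of_ae_eq_condExp {α : Type*} {m m₀ : MeasurableSpace α} {μ : Measure α}
    (hm : m ≤ m₀) [SigmaFinite (μ.trim hm)] {f g : α → ℝ} (hf : Integrable f μ)
    (hg : g =ᵐ[μ] μ[f | m]) {s : Set α} (hs : MeasurableSet[m] s) :
    ∫ x in s, g x ∂μ = ∫ x in s, f x ∂μ :=
  (setIntegral_congr_ae (hm s hs) (hg.mono fun _ hx _ => hx)).trans (setIntegral_condExp hm hf hs)

lemma ae_eq_condExp_of_measurePreserving {α β γ : Type*} [MeasurableSpace α] [MeasurableSpace β]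
    [MeasurableSpace γ] {μ : Measure α} {π : Measure β} [IsFiniteMeasure μ] [IsFiniteMeasure π]
    {T : α → β} (hT : MeasurePreserving T μ π) {r : β → γ} (hr : Measurable r) {f g : β → ℝ}
    (hf : Integrable f π) (hg : StronglyMeasurable[MeasurableSpace.comap r inferInstance] g)
    (h : (fun x => g (T x)) =ᵐ[μ]
      μ[fun x => f (T x) | MeasurableSpace.comap (fun x => r (T x)) inferInstance]) :
    g =ᵐ[π] π[f | MeasurableSpace.comap r inferInstance] := by
  have hg_int : Integrable g π :=
    (hT.integrable_comp (hg.mono hr.comap_le).aestronglyMeasurable).mp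
      (integrable_condExp.congr h.symm)
  refine ae_eq_condExp_of_forall_setIntegral_eq hr.comap_le hf
    (fun _ _ _ => hg_int.integrableOn) ?_ hg.aestronglyMeasurable
  rintro _ ⟨t, ht, rfl⟩ -
  rw [← hT.map_eq, setIntegral_map (hr ht) (hT.map_eq ▸ hg_int.1) hT.aemeasurable,
    setIntegral_map (hr ht) (hT.map_eq ▸ hf.1) hT.aemeasurable]
  exact setIntegral_eq_of_ae_eq_condExp (hr.comp hT.measurable).comap_le
    (hT.integrable_comp_of_integrable hf) h ⟨t, ht, rfl⟩

lemma setIntegral_preimage_eq_of_isPiSystem {X γ : Type*} [MeasurableSpace X]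
    [mγ : MeasurableSpace γ] {μ : Measure X} {p : X → γ} (hp : Measurable p) {f g : X → ℝ}
    (hf : Integrable f μ) (hg : Integrable g μ) {C : Set (Set γ)}
    (hgen : mγ = MeasurableSpace.generateFrom C) (hC : IsPiSystem C)
    (huniv : ∫ x, f x ∂μ = ∫ x, g x ∂μ)
    (heq : ∀ t ∈ C, ∫ x in p ⁻¹' t, f x ∂μ = ∫ x in p ⁻¹' t, g x ∂μ)
    {t : Set γ} (ht : MeasurableSet t) :
    ∫ x in p ⁻¹' t, f x ∂μ = ∫ x in p ⁻¹' t, g x ∂μ := by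
  have hmap : ∀ t, MeasurableSet t → ∀ h : X → ℝ, Integrable h μ →
      (μ.withDensityᵥ h).map p t = ∫ x in p ⁻¹' t, h x ∂μ := fun t ht h hh => by
    rw [VectorMeasure.map_apply _ hp ht, withDensityᵥ_apply hh (hp ht)]
  have key : (μ.withDensityᵥ f).map p = (μ.withDensityᵥ g).map p := by
    refine VectorMeasure.ext_of_generateFrom C (fun t ht => ?_) hgen hC ?_
    · have ht' : MeasurableSet t := hgen ▸ MeasurableSpace.measurableSet_generateFrom ht
      rw [hmap t ht' f hf, hmap t ht' g hg, heq t ht]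
    · simpa [hmap _ MeasurableSet.univ _ hf, hmap _ MeasurableSet.univ _ hg] using huniv
  rw [← hmap t ht f hf, ← hmap t ht g hg, key]

lemma MeasurableSpace.comap_prodMk_swap {α β γ : Type*} [MeasurableSpace β] [MeasurableSpace γ]
    (a : α → β) (b : α → γ) :
    MeasurableSpace.comap (fun x => (b x, a x)) inferInstance =
      MeasurableSpace.comap (fun x => (a x, b x)) inferInstance :=
  (MeasurableSpace.comap_prodMk b a).trans
    ((sup_comm _ _).trans (MeasurableSpace.comap_prodMk a b).symm)

section Prod

variable {α β ι κ : Type*} [MeasurableSpace α] [MeasurableSpace β] [MeasurableSpace ι]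
  [MeasurableSpace κ] {ν₁ : Measure α} {ν₂ : Measure β} [IsFiniteMeasure ν₁] [IsFiniteMeasure ν₂]

/-- By Fubini the integral is `∫ a in u, φ (j a) ∂ν₁` with `φ i = ∫ b in v, D i b ∂ν₂`, and the
hypothesis says that `φ ∘ j` vanishes almost everywhere. -/
lemma setIntegral_prod_eq_zero_of_preimage {j : α → ι} (hj : Measurable j) {D : ι → β → ℝ}
    (hD : StronglyMeasurable (Function.uncurry D))
    (hDint : Integrable (fun w : α × β => D (j w.1) w.2) (ν₁.prod ν₂)) {v : Set β}
    (hzero : ∀ b, MeasurableSet b → ∫ w in (j ⁻¹' b) ×ˢ v, D (j w.1) w.2 ∂(ν₁.prod ν₂) = 0)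
    {u : Set α} (hu : MeasurableSet u) :
    ∫ w in u ×ˢ v, D (j w.1) w.2 ∂(ν₁.prod ν₂) = 0 := by
  set φ : ι → ℝ := fun i => ∫ b in v, D i b ∂ν₂
  have hφ : StronglyMeasurable φ := hD.integral_prod_right'
  have fubini : ∀ s, MeasurableSet s →
      ∫ w in s ×ˢ v, D (j w.1) w.2 ∂(ν₁.prod ν₂) = ∫ a in s, φ (j a) ∂ν₁ := fun s _ => by
    rw [← Measure.prod_restrict,
      integral_prod _ (by rw [Measure.prod_restrict]; exact hDint.integrableOn)]
  have hφint : Integrable (fun a => φ (j a)) ν₁ := by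
    have h : Integrable (fun w : α × β => D (j w.1) w.2) (ν₁.prod (ν₂.restrict v)) := by
      rw [← Measure.restrict_univ (μ := ν₁), Measure.prod_restrict]
      exact hDint.integrableOn
    exact h.integral_prod_left
  have hφ0 : (fun a => φ (j a)) =ᵐ[ν₁] 0 := by
    refine ae_eq_of_forall_setIntegral_eq_of_sigmaFinite' hj.comap_le
      (fun _ _ _ => hφint.integrableOn) (fun _ _ _ => integrableOn_zero) ?_
      (hφ.comp_measurable (comap_measurable j)).aestronglyMeasurable aestronglyMeasurable_const
    rintro _ ⟨b, hb, rfl⟩ -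
    rw [← fubini _ (hj hb), hzero b hb, Pi.zero_def, integral_zero]
  rw [fubini u hu, integral_congr_ae (ae_restrict_of_ae hφ0), Pi.zero_def, integral_zero]

/-- Refining the conditioning from `(j a, k b)` to `(a, k b)` adds only information about `a`
beyond `j a`, which is independent of `b`, while the integrand sees `a` only through `j a`. -/
lemma ae_eq_condExp_prodMk_of_ae_eq_condExp {j : α → ι} {k : β → κ} (hj : Measurable j)
    (hk : Measurable k) {D : ι → β → ℝ} (hD : Measurable (Function.uncurry D))
    {G : ι → κ → ℝ} (hG : Measurable (Function.uncurry G))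
    (hf : Integrable (fun w : α × β => D (j w.1) w.2) (ν₁.prod ν₂))
    (h : (fun w : α × β => G (j w.1) (k w.2)) =ᵐ[ν₁.prod ν₂] (ν₁.prod ν₂)[fun w => D (j w.1) w.2 |
      MeasurableSpace.comap (fun w => (j w.1, k w.2)) inferInstance]) :
    (fun w : α × β => G (j w.1) (k w.2)) =ᵐ[ν₁.prod ν₂] (ν₁.prod ν₂)[fun w => D (j w.1) w.2 |
      MeasurableSpace.comap (fun w => (w.1, k w.2)) inferInstance] := by
  have hjk : Measurable fun w : α × β => (j w.1, k w.2) := by fun_prop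
  have hk' : Measurable fun w : α × β => (w.1, k w.2) := by fun_prop
  have hg : Integrable (fun w : α × β => G (j w.1) (k w.2)) (ν₁.prod ν₂) :=
    integrable_condExp.congr h.symm
  have h_on : ∀ s, MeasurableSet[MeasurableSpace.comap (fun w => (j w.1, k w.2)) inferInstance] s →
      ∫ w in s, G (j w.1) (k w.2) ∂(ν₁.prod ν₂) = ∫ w in s, D (j w.1) w.2 ∂(ν₁.prod ν₂) :=
    fun s hs => setIntegral_eq_of_ae_eq_condExp hjk.comap_le hf h hs
  refine ae_eq_condExp_of_forall_setIntegral_eq hk'.comap_le hf (fun _ _ _ => hg.integrableOn) ?_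
    (stronglyMeasurable_comap_comp (fun w : α × β => (w.1, k w.2)) (fun p => G (j p.1) p.2)
      (by fun_prop)).aestronglyMeasurable
  rintro _ ⟨t, ht, rfl⟩ -
  refine setIntegral_preimage_eq_of_isPiSystem hk' hg hf generateFrom_prod.symm isPiSystem_prod
    (by simpa using h_on Set.univ MeasurableSet.univ) ?_ ht
  rintro _ ⟨u, hu, c, hc, rfl⟩
  have hzero := setIntegral_prod_eq_zero_of_preimage (D := fun i b => G i (k b) - D i b) hj
    (by fun_prop : Measurable _).stronglyMeasurable (hg.sub hf) (v := k ⁻¹' c)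
    (fun b hb => by
      rw [integral_sub hg.integrableOn hf.integrableOn, sub_eq_zero]
      exact h_on _ ⟨b ×ˢ c, hb.prod hc, rfl⟩) hu
  rwa [integral_sub hg.integrableOn hf.integrableOn, sub_eq_zero] at hzero

end Prod

section Covariance

variable {Ω : Type*} {mΩ : MeasurableSpace Ω} {μ : Measure Ω}

lemma MeasureTheory.MeasurePreserving.covariance_fun_comp {Ω' : Type*} [MeasurableSpace Ω']
    {μ' : Measure Ω'} {T : Ω → Ω'} (hT : MeasurePreserving T μ μ') {X Y : Ω' → ℝ}
    (hX : AEStronglyMeasurable X μ') (hY : AEStronglyMeasurable Y μ') :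
    cov[fun ω => X (T ω), fun ω => Y (T ω); μ] = cov[X, Y; μ'] := by
  rw [← hT.map_eq, covariance_map_fun (hT.map_eq ▸ hX) (hT.map_eq ▸ hY) hT.aemeasurable]

lemma covariance_congr_ae {X X' Y Y' : Ω → ℝ} (hX : X =ᵐ[μ] X') (hY : Y =ᵐ[μ] Y') :
    cov[X, Y; μ] = cov[X', Y'; μ] := by
  simp only [covariance]
  rw [integral_congr_ae hX, integral_congr_ae hY]
  exact integral_congr_ae (by filter_upwards [hX, hY] with ω hXω hYω; rw [hXω, hYω])

lemma covariance_eq_covariance_of_ae_eq_condExp [IsProbabilityMeasure μ] {m : MeasurableSpace Ω}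
    (hm : m ≤ mΩ) {f g ψ : Ω → ℝ} (hf : MemLp f 2 μ) (hg : g =ᵐ[μ] μ[f | m])
    (hψm : StronglyMeasurable[m] ψ) (hψ : MemLp ψ 2 μ) :
    cov[f, ψ; μ] = cov[g, ψ; μ] := by
  have h_mean : ∫ x, g x ∂μ = ∫ x, f x ∂μ := (integral_congr_ae hg).trans (integral_condExp hm)
  have h_mul : ∫ x, f x * ψ x ∂μ = ∫ x, g x * ψ x ∂μ :=
    calc ∫ x, f x * ψ x ∂μ = ∫ x, (μ[fun x => f x * ψ x | m]) x ∂μ := (integral_condExp hm).symm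
      _ = ∫ x, (μ[f | m]) x * ψ x ∂μ := integral_congr_ae
          (condExp_mul_of_stronglyMeasurable_right hψm (hf.integrable_mul hψ)
            (hf.integrable one_le_two))
      _ = ∫ x, g x * ψ x ∂μ := integral_congr_ae (hg.mono fun x hx => by simp only [hx])
  rw [covariance_eq_sub hf hψ, covariance_eq_sub ((hf.condExp one_le_two).ae_eq hg.symm) hψ,
    h_mean]
  exact congrArg (· - _) h_mul

lemma covariance_eq_variance_of_ae_eq_condExp [IsProbabilityMeasure μ] {m : MeasurableSpace Ω}
    (hm : m ≤ mΩ) {f g : Ω → ℝ} (hf : MemLp f 2 μ) (hg : g =ᵐ[μ] μ[f | m])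
    (hgm : StronglyMeasurable[m] g) :
    cov[f, g; μ] = Var[g; μ] := by
  rw [covariance_eq_covariance_of_ae_eq_condExp hm hf hg hgm
    ((hf.condExp one_le_two).ae_eq hg.symm), covariance_self (hgm.mono hm).measurable.aemeasurable]

lemma variance_sub_smul_sub_smul_add_smul [IsFiniteMeasure μ] {X U V W : Ω → ℝ}
    (hX : MemLp X 2 μ) (hU : MemLp U 2 μ) (hV : MemLp V 2 μ) (hW : MemLp W 2 μ) (θ : ℝ)
    (hVV : Var[V; μ] = Var[U; μ]) (hXU : cov[X, U; μ] = Var[U; μ])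
    (hXV : cov[X, V; μ] = Var[U; μ]) (hXW : cov[X, W; μ] = Var[W; μ])
    (hUV : cov[U, V; μ] = Var[W; μ]) (hUW : cov[U, W; μ] = Var[W; μ])
    (hVW : cov[V, W; μ] = Var[W; μ]) :
    Var[X - θ • U - θ • V + θ ^ 2 • W; μ] =
      Var[X; μ] - 2 * θ * (2 - θ) * Var[U; μ] + θ ^ 2 * (2 - θ) ^ 2 * Var[W; μ] := by
  have hXUV : MemLp (X - θ • U - θ • V) 2 μ := (hX.sub (hU.const_smul θ)).sub (hV.const_smul θ)
  have hA : MemLp (X - θ • U - θ • V + θ ^ 2 • W) 2 μ := hXUV.add (hW.const_smul _)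
  have expand : ∀ {Y : Ω → ℝ}, MemLp Y 2 μ → cov[X - θ • U - θ • V + θ ^ 2 • W, Y; μ] =
      cov[X, Y; μ] - θ * cov[U, Y; μ] - θ * cov[V, Y; μ] + θ ^ 2 * cov[W, Y; μ] := fun hY => by
    rw [covariance_add_left hXUV (hW.const_smul _) hY,
      covariance_sub_left (hX.sub (hU.const_smul θ)) (hV.const_smul θ) hY,
      covariance_sub_left hX (hU.const_smul θ) hY, covariance_smul_left, covariance_smul_left,
      covariance_smul_left]
  set A := X - θ • U - θ • V + θ ^ 2 • W
  rw [← covariance_self hA.aemeasurable, expand hA, covariance_comm X A, covariance_comm U A,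
    covariance_comm V A, covariance_comm W A, expand hX, expand hU, expand hV, expand hW,
    covariance_comm U X, covariance_comm V X, covariance_comm W X, covariance_comm V U,
    covariance_comm W U, covariance_comm W V, covariance_self hX.aemeasurable,
    covariance_self hU.aemeasurable, covariance_self hV.aemeasurable,
    covariance_self hW.aemeasurable, hVV, hXU, hXV, hXW, hUV, hUW, hVW]
  ring

end Covariance

section ProjectedKernel

-- A point `w` of `(E × F) × (E × F)` is a pair of samples `((x₁, y₁), (x₂, y₂))`.
variable {E F : Type*} [MeasurableSpace E] [MeasurableSpace F] {ν : Measure (E × F)}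
  [IsProbabilityMeasure ν] {ℓ : F → F → ℝ} {L1 : F → E → ℝ} {L2 : E → E → ℝ}

lemma projTwo_ae_eq_condExp_projOne (hℓm : Measurable (Function.uncurry ℓ))
    (hL1m : Measurable (Function.uncurry L1))
    (hℓ : Integrable (fun w : (E × F) × (E × F) => ℓ w.1.2 w.2.2) (ν.prod ν))
    (h1 : (fun w : (E × F) × (E × F) => L1 w.1.2 w.2.1) =ᵐ[ν.prod ν] (ν.prod ν)[
      fun w => ℓ w.1.2 w.2.2 | MeasurableSpace.comap (fun w => (w.1.2, w.2.1)) inferInstance])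
    (h2 : (fun w : (E × F) × (E × F) => L2 w.1.1 w.2.1) =ᵐ[ν.prod ν] (ν.prod ν)[
      fun w => ℓ w.1.2 w.2.2 | MeasurableSpace.comap (fun w => (w.1.1, w.2.1)) inferInstance]) :
    (fun w : (E × F) × (E × F) => L2 w.1.1 w.2.1) =ᵐ[ν.prod ν] (ν.prod ν)[
      fun w => L1 w.1.2 w.2.1 | MeasurableSpace.comap (fun w => (w.1.1, w.2.1)) inferInstance] := by
  have h1' : (fun w : (E × F) × (E × F) => L1 w.1.2 w.2.1) =ᵐ[ν.prod ν] (ν.prod ν)[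
      fun w => ℓ w.1.2 w.2.2 | MeasurableSpace.comap (fun w => (w.1, w.2.1)) inferInstance] :=
    ae_eq_condExp_prodMk_of_ae_eq_condExp measurable_snd measurable_fst
      (D := fun y z => ℓ y z.2) (by fun_prop) hL1m hℓ h1
  have hle : MeasurableSpace.comap (fun w : (E × F) × (E × F) => (w.1.1, w.2.1)) inferInstance ≤
      MeasurableSpace.comap (fun w : (E × F) × (E × F) => (w.1, w.2.1)) inferInstance :=
    Measurable.comap_le (m₁ := MeasurableSpace.comap (fun w : (E × F) × (E × F) => (w.1, w.2.1))
      inferInstance) ((measurable_fst.prodMap measurable_id).comp (comap_measurable _))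
  exact h2.trans ((condExp_condExp_of_le hle
    (by fun_prop : Measurable fun w : (E × F) × (E × F) => (w.1, w.2.1)).comap_le).symm.trans
    (condExp_congr_ae h1'.symm))

lemma projTwo_swap_ae_eq (hsym : ∀ a b, ℓ a b = ℓ b a) (hL2m : Measurable (Function.uncurry L2))
    (hℓ : Integrable (fun w : (E × F) × (E × F) => ℓ w.1.2 w.2.2) (ν.prod ν))
    (h2 : (fun w : (E × F) × (E × F) => L2 w.1.1 w.2.1) =ᵐ[ν.prod ν] (ν.prod ν)[
      fun w => ℓ w.1.2 w.2.2 | MeasurableSpace.comap (fun w => (w.1.1, w.2.1)) inferInstance]) :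
    (fun w : (E × F) × (E × F) => L2 w.2.1 w.1.1) =ᵐ[ν.prod ν] fun w => L2 w.1.1 w.2.1 := by
  have hℓ_swap : (fun w : (E × F) × (E × F) => ℓ w.2.2 w.1.2) = fun w => ℓ w.1.2 w.2.2 :=
    funext fun w => hsym _ _
  refine (ae_eq_condExp_of_measurePreserving Measure.measurePreserving_swap (by fun_prop) hℓ
    (stronglyMeasurable_comap_comp (fun w : (E × F) × (E × F) => (w.1.1, w.2.1))
      (fun p => L2 p.2 p.1) (by fun_prop)) ?_).trans h2.symm
  simp only [Prod.fst_swap, Prod.snd_swap, hℓ_swap]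
  rwa [MeasurableSpace.comap_prodMk_swap (fun w : (E × F) × (E × F) => w.1.1) fun w => w.2.1]

lemma projTwo_swap_ae_eq_condExp_projOne_swap (hL1m : Measurable (Function.uncurry L1))
    (hL2m : Measurable (Function.uncurry L2))
    (hU : Integrable (fun w : (E × F) × (E × F) => L1 w.1.2 w.2.1) (ν.prod ν))
    (hK : (fun w : (E × F) × (E × F) => L2 w.1.1 w.2.1) =ᵐ[ν.prod ν] (ν.prod ν)[
      fun w => L1 w.1.2 w.2.1 | MeasurableSpace.comap (fun w => (w.1.1, w.2.1)) inferInstance]) :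
    (fun w : (E × F) × (E × F) => L2 w.2.1 w.1.1) =ᵐ[ν.prod ν] (ν.prod ν)[
      fun w => L1 w.2.2 w.1.1 | MeasurableSpace.comap (fun w => (w.1, w.2.1)) inferInstance] := by
  have hV := Measure.measurePreserving_swap.integrable_comp_of_integrable hU
  refine ae_eq_condExp_prodMk_of_ae_eq_condExp measurable_fst measurable_fst
    (D := fun x z => L1 z.2 x) (G := fun x₁ x₂ => L2 x₂ x₁) (by fun_prop) (by fun_prop) hV ?_
  refine ae_eq_condExp_of_measurePreserving Measure.measurePreserving_swap (by fun_prop) hV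
    (stronglyMeasurable_comap_comp (fun w : (E × F) × (E × F) => (w.1.1, w.2.1))
      (fun p => L2 p.2 p.1) (by fun_prop)) ?_
  simp only [Prod.fst_swap, Prod.snd_swap]
  rwa [MeasurableSpace.comap_prodMk_swap (fun w : (E × F) × (E × F) => w.1.1) fun w => w.2.1]

theorem variance_doubleProjection_prod (hsym : ∀ a b, ℓ a b = ℓ b a)
    (hℓm : Measurable (Function.uncurry ℓ)) (hL1m : Measurable (Function.uncurry L1))
    (hL2m : Measurable (Function.uncurry L2))
    (hℓ2 : MemLp (fun w : (E × F) × (E × F) => ℓ w.1.2 w.2.2) 2 (ν.prod ν))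
    (h1 : (fun w : (E × F) × (E × F) => L1 w.1.2 w.2.1) =ᵐ[ν.prod ν] (ν.prod ν)[
      fun w => ℓ w.1.2 w.2.2 | MeasurableSpace.comap (fun w => (w.1.2, w.2.1)) inferInstance])
    (h2 : (fun w : (E × F) × (E × F) => L2 w.1.1 w.2.1) =ᵐ[ν.prod ν] (ν.prod ν)[
      fun w => ℓ w.1.2 w.2.2 | MeasurableSpace.comap (fun w => (w.1.1, w.2.1)) inferInstance])
    (θ : ℝ) :
    Var[fun w => ℓ w.1.2 w.2.2 - θ * L1 w.1.2 w.2.1 - θ * L1 w.2.2 w.1.1 + θ ^ 2 * L2 w.1.1 w.2.1;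
        ν.prod ν] =
      Var[fun w => ℓ w.1.2 w.2.2; ν.prod ν] -
        2 * θ * (2 - θ) * Var[fun w => L1 w.1.2 w.2.1; ν.prod ν] +
        θ ^ 2 * (2 - θ) ^ 2 * Var[fun w => L2 w.1.1 w.2.1; ν.prod ν] := by
  have hswap := Measure.measurePreserving_swap (μ := ν) (ν := ν)
  have hU := (hℓ2.condExp one_le_two).ae_eq h1.symm
  have hW := (hℓ2.condExp one_le_two).ae_eq h2.symm
  have hV : MemLp (fun w : (E × F) × (E × F) => L1 w.2.2 w.1.1) 2 (ν.prod ν) :=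
    hU.comp_measurePreserving hswap
  have hW'W := projTwo_swap_ae_eq hsym hL2m (hℓ2.integrable one_le_two) h2
  have hK := projTwo_ae_eq_condExp_projOne hℓm hL1m (hℓ2.integrable one_le_two) h1 h2
  have hK' := projTwo_swap_ae_eq_condExp_projOne_swap hL1m hL2m (hU.integrable one_le_two) hK
  have hm₁ : Measurable fun w : (E × F) × (E × F) => (w.1.2, w.2.1) := by fun_prop
  have hm₂ : Measurable fun w : (E × F) × (E × F) => (w.1.1, w.2.1) := by fun_prop
  have hm₃ : Measurable fun w : (E × F) × (E × F) => (w.1, w.2.1) := by fun_prop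
  have hU₁ := stronglyMeasurable_comap_comp (fun w : (E × F) × (E × F) => (w.1.2, w.2.1))
    (fun p => L1 p.1 p.2) (by fun_prop)
  have hU₃ := stronglyMeasurable_comap_comp (fun w : (E × F) × (E × F) => (w.1, w.2.1))
    (fun p => L1 p.1.2 p.2) (by fun_prop)
  have hW₂ := stronglyMeasurable_comap_comp (fun w : (E × F) × (E × F) => (w.1.1, w.2.1))
    (fun p => L2 p.1 p.2) (by fun_prop)
  have hℓ_swap : (fun w : (E × F) × (E × F) => ℓ w.2.2 w.1.2) = fun w => ℓ w.1.2 w.2.2 :=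
    funext fun w => hsym _ _
  have hℓU := covariance_eq_variance_of_ae_eq_condExp hm₁.comap_le hℓ2 h1 hU₁
  have hUW := covariance_eq_variance_of_ae_eq_condExp hm₂.comap_le hU hK hW₂
  have hVW : cov[fun w => L1 w.2.2 w.1.1, fun w => L2 w.1.1 w.2.1; ν.prod ν] =
      Var[fun w => L2 w.1.1 w.2.1; ν.prod ν] := by
    rw [← covariance_congr_ae Filter.EventuallyEq.rfl hW'W, ← hUW]
    exact hswap.covariance_fun_comp hU.aestronglyMeasurable hW.aestronglyMeasurable
  refine variance_sub_smul_sub_smul_add_smul hℓ2 hU hV hW θ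
    (hswap.variance_fun_comp hU.aemeasurable) hℓU ?_
    (covariance_eq_variance_of_ae_eq_condExp hm₂.comap_le hℓ2 h2 hW₂) ?_ hUW hVW
  · rw [← hℓ_swap, ← hℓU]
    exact hswap.covariance_fun_comp hℓ2.aestronglyMeasurable hU.aestronglyMeasurable
  · rw [covariance_comm, covariance_eq_covariance_of_ae_eq_condExp hm₃.comap_le hV hK' hU₃ hU,
      covariance_congr_ae hW'W Filter.EventuallyEq.rfl, covariance_comm, hUW]

end ProjectedKernel

theorem stmt_11_general {Ω E F : Type*} [MeasurableSpace Ω] [MeasurableSpace E]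
    [MeasurableSpace F]
    (μ : Measure Ω) [IsProbabilityMeasure μ]
    (X₁ X₂ : Ω → E) (Y₁ Y₂ : Ω → F)
    (hX₁ : Measurable X₁) (hX₂ : Measurable X₂)
    (hY₁ : Measurable Y₁) (hY₂ : Measurable Y₂)
    (hind : IndepFun (fun ω => (X₁ ω, Y₁ ω)) (fun ω => (X₂ ω, Y₂ ω)) μ)
    (hid : IdentDistrib (fun ω => (X₁ ω, Y₁ ω)) (fun ω => (X₂ ω, Y₂ ω)) μ μ)
    (ℓ : F → F → ℝ) (hsym : ∀ a b, ℓ a b = ℓ b a)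
    (hℓm : Measurable (Function.uncurry ℓ))
    (hℓ2 : MemLp (fun ω => ℓ (Y₁ ω) (Y₂ ω)) 2 μ)
    (L1 : F → E → ℝ) (L2 : E → E → ℝ)
    (hL1m : Measurable (Function.uncurry L1))
    (hL2m : Measurable (Function.uncurry L2))
    (h1 : (fun ω => L1 (Y₁ ω) (X₂ ω)) =ᵐ[μ]
      μ[fun ω => ℓ (Y₁ ω) (Y₂ ω) |
        MeasurableSpace.comap (fun ω => (Y₁ ω, X₂ ω)) inferInstance])
    (h2 : (fun ω => L2 (X₁ ω) (X₂ ω)) =ᵐ[μ]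
      μ[fun ω => ℓ (Y₁ ω) (Y₂ ω) |
        MeasurableSpace.comap (fun ω => (X₁ ω, X₂ ω)) inferInstance])
    (θ : ℝ) :
    variance (fun ω => ℓ (Y₁ ω) (Y₂ ω) - θ * L1 (Y₁ ω) (X₂ ω)
        - θ * L1 (Y₂ ω) (X₁ ω) + θ ^ 2 * L2 (X₁ ω) (X₂ ω)) μ =
      variance (fun ω => ℓ (Y₁ ω) (Y₂ ω)) μ -
        2 * θ * (2 - θ) * variance (fun ω => L1 (Y₁ ω) (X₂ ω)) μ +
        θ ^ 2 * (2 - θ) ^ 2 * variance (fun ω => L2 (X₁ ω) (X₂ ω)) μ := by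
  have hZ₁ : Measurable fun ω => (X₁ ω, Y₁ ω) := hX₁.prodMk hY₁
  have hZ₂ : Measurable fun ω => (X₂ ω, Y₂ ω) := hX₂.prodMk hY₂
  set ν := μ.map fun ω => (X₁ ω, Y₁ ω)
  have : IsProbabilityMeasure ν := Measure.isProbabilityMeasure_map hZ₁.aemeasurable
  have hT : MeasurePreserving (fun ω => ((X₁ ω, Y₁ ω), (X₂ ω, Y₂ ω))) μ (ν.prod ν) :=
    ⟨hZ₁.prodMk hZ₂, by
      rw [(indepFun_iff_map_prod_eq_prod_map_map hZ₁.aemeasurable hZ₂.aemeasurable).mp hind,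
        ← hid.map_eq]⟩
  have hΛm : Measurable fun w : (E × F) × (E × F) => ℓ w.1.2 w.2.2 := by fun_prop
  have hΛ2 : MemLp (fun w : (E × F) × (E × F) => ℓ w.1.2 w.2.2) 2 (ν.prod ν) :=
    ⟨hΛm.aestronglyMeasurable, eLpNorm_comp_measurePreserving hΛm.aestronglyMeasurable hT ▸ hℓ2.2⟩
  have h1' := ae_eq_condExp_of_measurePreserving hT (by fun_prop) (hΛ2.integrable one_le_two)
    (stronglyMeasurable_comap_comp (fun w : (E × F) × (E × F) => (w.1.2, w.2.1))
      (fun p => L1 p.1 p.2) (by fun_prop)) h1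
  have h2' := ae_eq_condExp_of_measurePreserving hT (by fun_prop) (hΛ2.integrable one_le_two)
    (stronglyMeasurable_comap_comp (fun w : (E × F) × (E × F) => (w.1.1, w.2.1))
      (fun p => L2 p.1 p.2) (by fun_prop)) h2
  have key := variance_doubleProjection_prod hsym hℓm hL1m hL2m hΛ2 h1' h2' θ
  rwa [← hT.variance_fun_comp (by fun_prop), ← hT.variance_fun_comp (by fun_prop),
    ← hT.variance_fun_comp (by fun_prop), ← hT.variance_fun_comp (by fun_prop)] at key

/-- Variance of the doubly-projected kernel
`A = ℓ(Y₁,Y₂) − θℓ₁(Y₁,X₂) − θℓ₁(Y₂,X₁) + θ²ℓ₂(X₁,X₂)`: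
`Var(A) = Var(ℓ(Y₁,Y₂)) − 2θ(2−θ)Var(ℓ₁(Y₁,X₂)) + θ²(2−θ)²Var(ℓ₂(X₁,X₂))`. -/
theorem stmt_11 {Ω E F : Type*} [MeasurableSpace Ω] [MeasurableSpace E]
    [MeasurableSpace F]
    (μ : Measure Ω) [IsProbabilityMeasure μ]
    (X₁ X₂ : Ω → E) (Y₁ Y₂ : Ω → F)
    (hX₁ : Measurable X₁) (hX₂ : Measurable X₂)
    (hY₁ : Measurable Y₁) (hY₂ : Measurable Y₂)
    (hind : IndepFun (fun ω => (X₁ ω, Y₁ ω)) (fun ω => (X₂ ω, Y₂ ω)) μ)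
    (hid : IdentDistrib (fun ω => (X₁ ω, Y₁ ω)) (fun ω => (X₂ ω, Y₂ ω)) μ μ)
    (ℓ : F → F → ℝ) (hsym : ∀ a b, ℓ a b = ℓ b a)
    (hℓm : Measurable (Function.uncurry ℓ))
    (hℓ2 : MemLp (fun ω => ℓ (Y₁ ω) (Y₂ ω)) 2 μ)
    (L1 : F → E → ℝ) (L2 : E → E → ℝ)
    (hL1m : Measurable (Function.uncurry L1))
    (hL2m : Measurable (Function.uncurry L2))
    (h1 : (fun ω => L1 (Y₁ ω) (X₂ ω)) =ᵐ[μ]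
      μ[fun ω => ℓ (Y₁ ω) (Y₂ ω) |
        MeasurableSpace.comap (fun ω => (Y₁ ω, X₂ ω)) inferInstance])
    (h2 : (fun ω => L2 (X₁ ω) (X₂ ω)) =ᵐ[μ]
      μ[fun ω => ℓ (Y₁ ω) (Y₂ ω) |
        MeasurableSpace.comap (fun ω => (X₁ ω, X₂ ω)) inferInstance])
    (θ : ℝ) (hθ0 : 0 ≤ θ) (hθ1 : θ ≤ 1) :
    variance (fun ω => ℓ (Y₁ ω) (Y₂ ω) - θ * L1 (Y₁ ω) (X₂ ω)
        - θ * L1 (Y₂ ω) (X₁ ω) + θ ^ 2 * L2 (X₁ ω) (X₂ ω)) μ =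
      variance (fun ω => ℓ (Y₁ ω) (Y₂ ω)) μ -
        2 * θ * (2 - θ) * variance (fun ω => L1 (Y₁ ω) (X₂ ω)) μ +
        θ ^ 2 * (2 - θ) ^ 2 * variance (fun ω => L2 (X₁ ω) (X₂ ω)) μ :=
  stmt_11_general μ X₁ X₂ Y₁ Y₂ hX₁ hX₂ hY₁ hY₂ hind hid ℓ hsym hℓm hℓ2 L1 L2 hL1m hL2m h1 h2 θ
end

section
/- Let Z₁, Z₂ be i.i.d. N(0,1), λ > 0, and ε ∈ (0, 1/2). Define S = (1 − ε/(1+λ))·Z₁ + (ε·√λ/(1+λ))·Z₂. Then S ~ N(0, v²) with v² = (1 − ε/(1+λ))² + ε²λ/(1+λ)² = ((1−ε)² + λ)/(1+λ), and there exists a constant c > 0 (uniform in ε ∈ (0,1/2) and λ ≥ 1) such that sup_{t} |P(S ≤ t) − Φ(t)| ≥ |Φ(1/v) − Φ(1)| ≥ c·ε/(1+λ). -/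
open MeasureTheory ProbabilityTheory Real Set
open scoped NNReal

/-!
`S` is a linear combination of independent standard Gaussians, hence centred Gaussian with
variance `v²`, and the Kolmogorov distance is at least its value at `t = 1`, namely
`|Φ(1/v) - Φ(1)|`. Since `1/4 ≤ v² < 1` and `1 - v² = ε(2 - ε)/(1 + λ) ≥ ε/(1 + λ)`, the point
`1/v` lies in `[1, 2]` and `1/v - 1 ≥ (1 - v²)/2`. The standard density is decreasing on
`[0, ∞)`, so it is at least `φ(2)` on `[1, 1/v]`, whence `Φ(1/v) - Φ(1) ≥ φ(2) ε / (2(1 + λ))`.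
-/

namespace ProbabilityTheory

lemma gaussianReal_const_mul_add_const_mul_of_indepFun {Ω : Type*} {mΩ : MeasurableSpace Ω}
    {P : Measure Ω} {X Y : Ω → ℝ} {m₁ m₂ : ℝ} {v₁ v₂ : ℝ≥0}
    (hX : HasLaw X (gaussianReal m₁ v₁) P) (hY : HasLaw Y (gaussianReal m₂ v₂) P)
    (hXY : IndepFun X Y P) (a b : ℝ) :
    HasLaw (fun ω ↦ a * X ω + b * Y ω)
      (gaussianReal (a * m₁ + b * m₂) (a ^ 2 * v₁ + b ^ 2 * v₂).toNNReal) P := by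
  have h := (hXY.comp (measurable_const_mul a) (measurable_const_mul b)).hasLaw_fun_add
    (gaussianReal_const_mul hX a) (gaussianReal_const_mul hY b)
  rw [gaussianReal_conv_gaussianReal] at h
  convert h using 2
  rw [← NNReal.coe_inj, Real.coe_toNNReal _ (by positivity)]
  simp

lemma gaussianReal_Iic_eq_Iic_div_sqrt {w : ℝ} (hw : 0 < w) (x : ℝ) :
    gaussianReal 0 w.toNNReal (Iic x) = gaussianReal 0 1 (Iic (x / √w)) := by
  have hmap : (gaussianReal 0 1).map (√w * ·) = gaussianReal 0 w.toNNReal := by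
    rw [gaussianReal_map_const_mul, mul_zero]
    congr 1
    ext
    simp [sq_sqrt hw.le, hw.le]
  rw [← hmap, Measure.map_apply (by fun_prop) measurableSet_Iic]
  congr 1
  ext y
  simp [le_div_iff₀ (sqrt_pos.2 hw), mul_comm]

lemma gaussianPDFReal_antitoneOn (μ : ℝ) (v : ℝ≥0) :
    AntitoneOn (gaussianPDFReal μ v) (Ici μ) := by
  intro x hx y _ hxy
  simp only [gaussianPDFReal]
  have hxμ : 0 ≤ x - μ := sub_nonneg.2 hx
  gcongr

lemma mul_gaussianPDFReal_le_sub {μ a b : ℝ} {v : ℝ≥0} (hv : v ≠ 0) (ha : μ ≤ a)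
    (hab : a ≤ b) :
    (b - a) * gaussianPDFReal μ v b
      ≤ (gaussianReal μ v (Iic b)).toReal - (gaussianReal μ v (Iic a)).toReal := by
  have hsplit : (gaussianReal μ v (Iic b)).toReal - (gaussianReal μ v (Iic a)).toReal
      = ∫ x in Ioc a b, gaussianPDFReal μ v x := by
    rw [← Iic_union_Ioc_eq_Iic hab, measure_union (Iic_disjoint_Ioc le_rfl) measurableSet_Ioc,
      ENNReal.toReal_add (measure_ne_top _ _) (measure_ne_top _ _), add_sub_cancel_left,
      gaussianReal_apply_eq_integral _ hv, ENNReal.toReal_ofReal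
        (setIntegral_nonneg measurableSet_Ioc fun x _ ↦ gaussianPDFReal_nonneg _ _ _)]
  calc (b - a) * gaussianPDFReal μ v b = ∫ _ in Ioc a b, gaussianPDFReal μ v b := by
        rw [setIntegral_const, volume_real_Ioc_of_le hab, smul_eq_mul]
    _ ≤ ∫ x in Ioc a b, gaussianPDFReal μ v x :=
        setIntegral_mono_on (integrableOn_const measure_Ioc_lt_top.ne)
          (integrable_gaussianPDFReal μ v).integrableOn measurableSet_Ioc fun x hx ↦
            gaussianPDFReal_antitoneOn μ v (ha.trans hx.1.le) (ha.trans hab) hx.2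
    _ = _ := hsplit.symm

end ProbabilityTheory

lemma one_sub_div_two_le_one_div_sqrt_sub_one {w : ℝ} (hw : 0 < w) :
    (1 - w) / 2 ≤ 1 / √w - 1 := by
  have hs0 : 0 < √w := sqrt_pos.2 hw
  have key : (1 - √w ^ 2) / 2 ≤ 1 / √w - 1 := by
    rw [le_sub_iff_add_le, le_div_iff₀ hs0]
    nlinarith [mul_nonneg (sq_nonneg (1 - √w)) hs0.le]
  rwa [sq_sqrt hw.le] at key

lemma abs_sub_le_iSup_abs_sub {ι : Type*} {f g : ι → ℝ} (hf : ∀ i, f i ∈ Icc 0 1)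
    (hg : ∀ i, g i ∈ Icc 0 1) (i : ι) : |f i - g i| ≤ ⨆ j, |f j - g j| :=
  le_ciSup ⟨(1 : ℝ), by
    rintro _ ⟨j, rfl⟩
    exact abs_sub_le_of_nonneg_of_le (hf j).1 (hf j).2 (hg j).1 (hg j).2⟩ i

lemma one_sub_div_two_mul_gaussianPDFReal_two_le {w : ℝ} (hw0 : 1 / 4 ≤ w) (hw1 : w ≤ 1) :
    (1 - w) / 2 * gaussianPDFReal 0 1 2
      ≤ (gaussianReal 0 1 (Iic (1 / √w))).toReal - (gaussianReal 0 1 (Iic 1)).toReal := by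
  have hs0 : 0 < √w := sqrt_pos.2 (by linarith)
  have hs : 1 / 2 ≤ √w := by nlinarith [sq_sqrt (show 0 ≤ w by linarith)]
  have hb1 : 1 ≤ 1 / √w := one_le_one_div hs0 (sqrt_le_one.2 hw1)
  have hb2 : 1 / √w ≤ 2 := by rw [div_le_iff₀ hs0]; linarith
  calc (1 - w) / 2 * gaussianPDFReal 0 1 2
      ≤ (1 / √w - 1) * gaussianPDFReal 0 1 (1 / √w) :=
        mul_le_mul (one_sub_div_two_le_one_div_sqrt_sub_one (by linarith))
          (gaussianPDFReal_antitoneOn 0 1 (by rw [mem_Ici]; linarith) (by norm_num) hb2)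
          (gaussianPDFReal_nonneg _ _ _) (by linarith)
    _ ≤ _ := mul_gaussianPDFReal_le_sub one_ne_zero zero_le_one hb1

lemma mul_div_le_abs_gaussianReal_Iic_sub {ε l : ℝ} (hε : 0 < ε) (hε2 : ε < 1 / 2) (hl : 0 ≤ l) :
    gaussianPDFReal 0 1 2 / 2 * ε / (1 + l)
      ≤ |(gaussianReal 0 1 (Iic (1 / √(((1 - ε) ^ 2 + l) / (1 + l))))).toReal
          - (gaussianReal 0 1 (Iic 1)).toReal| := by
  have hl0 : 0 < 1 + l := by linarith
  set w := ((1 - ε) ^ 2 + l) / (1 + l) with hw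
  have hw0 : 1 / 4 ≤ w := by
    rw [hw, le_div_iff₀ hl0]
    nlinarith
  -- `1 - w = ε (2 - ε) / (1 + l)`
  have hgap : ε / (1 + l) ≤ 1 - w := by
    rw [hw, one_sub_div hl0.ne', div_le_div_iff_of_pos_right hl0]
    nlinarith
  calc gaussianPDFReal 0 1 2 / 2 * ε / (1 + l)
      = ε / (1 + l) / 2 * gaussianPDFReal 0 1 2 := by ring
    _ ≤ (1 - w) / 2 * gaussianPDFReal 0 1 2 :=
      mul_le_mul_of_nonneg_right (by linarith) (gaussianPDFReal_nonneg _ _ _)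
    _ ≤ _ := one_sub_div_two_mul_gaussianPDFReal_two_le hw0 (by linarith [div_pos hε hl0])
    _ ≤ _ := le_abs_self _

/-- For `S = (1 − ε/(1+λ))Z₁ + (ε√λ/(1+λ))Z₂` with `Z₁, Z₂` i.i.d. standard normal:
`S ~ N(0, v²)` with `v² = (1−ε/(1+λ))² + ε²λ/(1+λ)² = ((1−ε)²+λ)/(1+λ)`, and there
is a constant `c > 0` uniform in `ε ∈ (0,1/2)`, `λ ≥ 1` such that
`sup_t |P(S ≤ t) − Φ(t)| ≥ |Φ(1/v) − Φ(1)| ≥ c·ε/(1+λ)`. -/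
theorem stmt_17 :
    ∃ c : ℝ, 0 < c ∧
      ∀ (Ω : Type) (_ : MeasurableSpace Ω) (μ : Measure Ω),
        IsProbabilityMeasure μ →
        ∀ (Z₁ Z₂ : Ω → ℝ), Measurable Z₁ → Measurable Z₂ →
          IndepFun Z₁ Z₂ μ →
          Measure.map Z₁ μ = gaussianReal 0 1 →
          Measure.map Z₂ μ = gaussianReal 0 1 →
          ∀ (ε l : ℝ), 0 < ε → ε < 1 / 2 → 1 ≤ l →
            let v2 : ℝ := ((1 - ε) ^ 2 + l) / (1 + l)
            let S : Ω → ℝ := fun ω =>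
              (1 - ε / (1 + l)) * Z₁ ω + (ε * Real.sqrt l / (1 + l)) * Z₂ ω
            let Φ : ℝ → ℝ := fun x => ((gaussianReal 0 1) (Set.Iic x)).toReal
            ((1 - ε / (1 + l)) ^ 2 + ε ^ 2 * l / (1 + l) ^ 2 = v2) ∧
            Measure.map S μ = gaussianReal 0 (Real.toNNReal v2) ∧
            (⨆ t : ℝ, |(μ {ω | S ω ≤ t}).toReal - Φ t|) ≥
              |Φ (1 / Real.sqrt v2) - Φ 1| ∧
            |Φ (1 / Real.sqrt v2) - Φ 1| ≥ c * ε / (1 + l) := by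
  refine ⟨gaussianPDFReal 0 1 2 / 2, half_pos (gaussianPDFReal_pos 0 1 2 one_ne_zero), ?_⟩
  intro Ω _ μ _ Z₁ Z₂ hZ₁ hZ₂ hindep hmap₁ hmap₂ ε l hε hε2 hl v2 S Φ
  have hvar : (1 - ε / (1 + l)) ^ 2 + ε ^ 2 * l / (1 + l) ^ 2 = v2 := by
    simp only [v2]
    field_simp
    ring
  have hv2 : 0 < v2 := by positivity
  have hS : HasLaw S (gaussianReal 0 v2.toNNReal) μ := by
    convert gaussianReal_const_mul_add_const_mul_of_indepFun ⟨hZ₁.aemeasurable, hmap₁⟩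
      ⟨hZ₂.aemeasurable, hmap₂⟩ hindep (1 - ε / (1 + l)) (ε * √l / (1 + l)) using 3
    · simp
    · simp [← hvar, div_pow, mul_pow, sq_sqrt (show 0 ≤ l by linarith)]
  have hS_one : (μ {ω | S ω ≤ 1}).toReal = Φ (1 / √v2) :=
    congrArg ENNReal.toReal
      ((hS.measure_eq measurableSet_Iic).trans (gaussianReal_Iic_eq_Iic_div_sqrt hv2 1))
  refine ⟨hvar, hS.map_eq, ?_, mul_div_le_abs_gaussianReal_Iic_sub hε hε2 (by linarith)⟩
  rw [← hS_one]
  exact abs_sub_le_iSup_abs_sub (f := fun t ↦ (μ {ω | S ω ≤ t}).toReal) (g := Φ)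
    (fun _ ↦ ⟨ENNReal.toReal_nonneg, measureReal_le_one⟩)
    (fun _ ↦ ⟨ENNReal.toReal_nonneg, measureReal_le_one⟩) 1
end
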